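/- arXiv:1103.2261 — 12 statements merged into one kernel-verified Lean document; each statement's English description precedes it below -/
import Mathlib

section
/- Let H be a finite prebialgebra (finitely generated projective over k). Then H satisfies the left monoidality axiom (lm): ε(hkl) = ε(hk₍₁₎)ε(k₍₂₎l) for all h,k,l ∈ H, if and only if the dual prebialgebra H* satisfies the left comonoidality axiom (lc): Δ²(ε) = ε₍₁₎ ⊗ ε₍₂₎ε₍₁'₎ ⊗ ε₍₂'₎ (where H* has the opposite convolution product and the comultiplication dual to multiplication of H). -/
open TensorProduct Coalgebra

section Prebialgebra

variable (R H : Type) [CommRing R] [Ring H] [Algebra R H] [Coalgebra R H]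

/-- The target map `ε_t(h) = ε(1₍₁₎h)1₍₂₎`. -/
noncomputable def epsT : H →ₗ[R] H :=
  (TensorProduct.lid R H).toLinearMap ∘ₗ
    TensorProduct.map Coalgebra.counit LinearMap.id ∘ₗ
    LinearMap.mulLeft R (Coalgebra.comul (R := R) (1 : H)) ∘ₗ
    Algebra.TensorProduct.includeLeft.toLinearMap

/-- The source map `ε_s(h) = ε(h1₍₂₎)1₍₁₎`. -/
noncomputable def epsS : H →ₗ[R] H :=
  (TensorProduct.rid R H).toLinearMap ∘ₗ
    TensorProduct.map LinearMap.id Coalgebra.counit ∘ₗ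
    LinearMap.mulRight R (Coalgebra.comul (R := R) (1 : H)) ∘ₗ
    Algebra.TensorProduct.includeRight.toLinearMap

/-- The map `ε̄_s(h) = ε(1₍₂₎h)1₍₁₎`. -/
noncomputable def epsSbar : H →ₗ[R] H :=
  (TensorProduct.rid R H).toLinearMap ∘ₗ
    TensorProduct.map LinearMap.id Coalgebra.counit ∘ₗ
    LinearMap.mulLeft R (Coalgebra.comul (R := R) (1 : H)) ∘ₗ
    Algebra.TensorProduct.includeRight.toLinearMap

/-- The map `ε̄_t(h) = ε(h1₍₁₎)1₍₂₎`. -/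
noncomputable def epsTbar : H →ₗ[R] H :=
  (TensorProduct.lid R H).toLinearMap ∘ₗ
    TensorProduct.map Coalgebra.counit LinearMap.id ∘ₗ
    LinearMap.mulRight R (Coalgebra.comul (R := R) (1 : H)) ∘ₗ
    Algebra.TensorProduct.includeLeft.toLinearMap

/-- The prebialgebra axiom: the comultiplication is multiplicative, `Δ(hk) = Δ(h)Δ(k)`. -/
def ComulMul : Prop :=
  ∀ a b : H,
    Coalgebra.comul (R := R) (a * b) = Coalgebra.comul (R := R) a * Coalgebra.comul (R := R) b

/-- Axiom (lm): `ε(hkl) = ε(hk₍₁₎)ε(k₍₂₎l)` for all `h,k,l`. -/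
noncomputable def LM : Prop :=
  ∀ h k l : H,
    Coalgebra.counit (R := R) (h * k * l) =
      LinearMap.mul' R R
        (TensorProduct.map (Coalgebra.counit ∘ₗ LinearMap.mulLeft R h)
          (Coalgebra.counit ∘ₗ LinearMap.mulRight R l) (Coalgebra.comul k))

/-- Axiom (rm): `ε(hkl) = ε(hk₍₂₎)ε(k₍₁₎l)` for all `h,k,l`. -/
noncomputable def RM : Prop :=
  ∀ h k l : H,
    Coalgebra.counit (R := R) (h * k * l) =
      LinearMap.mul' R R
        (TensorProduct.map (Coalgebra.counit ∘ₗ LinearMap.mulRight R l)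
          (Coalgebra.counit ∘ₗ LinearMap.mulLeft R h) (Coalgebra.comul k))

/-- `Δ²(1) = (id ⊗ Δ)(Δ(1))`, an element of `H ⊗ (H ⊗ H)`. -/
noncomputable def comulSq1 : H ⊗[R] (H ⊗[R] H) :=
  (TensorProduct.map LinearMap.id Coalgebra.comul) (Coalgebra.comul (R := R) (1 : H))

/-- `1₍₁₎ ⊗ 1₍₂₎ ⊗ 1`, an element of `H ⊗ (H ⊗ H)`. -/
noncomputable def d1Left : H ⊗[R] (H ⊗[R] H) :=
  (TensorProduct.map LinearMap.id Algebra.TensorProduct.includeLeft.toLinearMap)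
    (Coalgebra.comul (R := R) (1 : H))

/-- `1 ⊗ 1₍₁₎ ⊗ 1₍₂₎`, an element of `H ⊗ (H ⊗ H)`. -/
noncomputable def d1Right : H ⊗[R] (H ⊗[R] H) :=
  (1 : H) ⊗ₜ[R] (Coalgebra.comul (R := R) (1 : H))

/-- Axiom (lc): `Δ²(1) = 1₍₁₎ ⊗ 1₍₂₎1₍₁'₎ ⊗ 1₍₂'₎`. -/
noncomputable def LC : Prop := comulSq1 R H = d1Left R H * d1Right R H

/-- Axiom (rc): `Δ²(1) = 1₍₁₎ ⊗ 1₍₁'₎1₍₂₎ ⊗ 1₍₂'₎`. -/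
noncomputable def RC : Prop := comulSq1 R H = d1Right R H * d1Left R H

/-- The map `g : H → H*`, `⟨g(h), k⟩ = ε(kh)`. -/
noncomputable def gmap : H →ₗ[R] (H →ₗ[R] R) :=
  LinearMap.llcomp R H H R (Coalgebra.counit (R := R)) ∘ₗ (LinearMap.mul R H).flip

/-- The map `g' : H → H*`, `⟨g'(h), k⟩ = ε(hk)`. -/
noncomputable def gmap' : H →ₗ[R] (H →ₗ[R] R) :=
  LinearMap.llcomp R H H R (Coalgebra.counit (R := R)) ∘ₗ LinearMap.mul R H

/-- The map `f : H* → H`, `f(h*) = ⟨h*,1₍₁₎⟩1₍₂₎`. -/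
noncomputable def fmap (φ : H →ₗ[R] R) : H :=
  (TensorProduct.lid R H)
    ((TensorProduct.map φ LinearMap.id) (Coalgebra.comul (R := R) (1 : H)))

end Prebialgebra

section Dual

variable (R H : Type) [CommRing R] [Ring H] [Algebra R H] [Coalgebra R H]

/-- The opposite convolution product on `H* = Hom(H,k)`, as a linear map
`H* ⊗ H* → H*`: `⟨φψ, h⟩ = ⟨φ, h₍₂₎⟩⟨ψ, h₍₁₎⟩`. -/
noncomputable def convOp :
    ((H →ₗ[R] R) ⊗[R] (H →ₗ[R] R)) →ₗ[R] (H →ₗ[R] R) :=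
  (LinearMap.lcomp R R (Coalgebra.comul (R := R)) ∘ₗ TensorProduct.dualDistrib R H H) ∘ₗ
    (TensorProduct.comm R (H →ₗ[R] R) (H →ₗ[R] R)).toLinearMap

end Dual

/-!
Evaluating the two sides of (lc) for `H*` on `a ⊗ b ⊗ c ∈ H ⊗ H ⊗ H` gives `ε(cba)` and
`ε(cb₍₁₎)ε(b₍₂₎a)`, the two sides of (lm) at `(c, b, a)`. Since `H` is finitely generated
projective, `H* ⊗ N ≅ Hom(H, N)`, so `H* ⊗ H* ⊗ H* → (H ⊗ H ⊗ H)*` is injective and (lc) holds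
exactly when these evaluations agree.
-/

namespace TensorProduct

variable {R M N P : Type*} [CommRing R] [AddCommGroup M] [Module R M] [AddCommGroup N]
  [Module R N] [AddCommGroup P] [Module R P]

theorem dualDistrib_eq_lift_comp_dualTensorHom :
    dualDistrib R M N =
      (lift.equiv (RingHom.id R) M N R).toLinearMap ∘ₗ dualTensorHom R M (Module.Dual R N) := by
  ext f g m n
  simp [dualDistrib_apply, dualTensorHom_apply]

theorem dualDistrib_bijective [Module.Finite R M] [Module.Projective R M] :
    Function.Bijective (dualDistrib R M N) := by
  rw [dualDistrib_eq_lift_comp_dualTensorHom, LinearMap.coe_comp]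
  exact (LinearEquiv.bijective _).comp dualTensorHom_bijective

theorem dualDistrib_tmul_eq_mul'_comp_map (f : Module.Dual R M) (g : Module.Dual R N) :
    dualDistrib R M N (f ⊗ₜ g) = LinearMap.mul' R R ∘ₗ map f g := by
  ext
  simp [dualDistrib_apply]

variable (R M N P) in
noncomputable def dualDistrib₃ :
    Module.Dual R M ⊗[R] (Module.Dual R N ⊗[R] Module.Dual R P) →ₗ[R]
      Module.Dual R (M ⊗[R] (N ⊗[R] P)) :=
  dualDistrib R M (N ⊗[R] P) ∘ₗ LinearMap.lTensor _ (dualDistrib R N P)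

theorem dualDistrib₃_injective [Module.Finite R M] [Module.Projective R M] [Module.Finite R N]
    [Module.Projective R N] : Function.Injective (dualDistrib₃ R M N P) :=
  dualDistrib_bijective.injective.comp
    (Module.Flat.lTensor_preserves_injective_linearMap _ dualDistrib_bijective.injective)

theorem eq_iff_forall_dualDistrib₃_tmul [Module.Finite R M] [Module.Projective R M]
    [Module.Finite R N] [Module.Projective R N]
    {T T' : Module.Dual R M ⊗[R] (Module.Dual R N ⊗[R] Module.Dual R P)} :
    T = T' ↔ ∀ m n p, dualDistrib₃ R M N P T (m ⊗ₜ (n ⊗ₜ p)) =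
      dualDistrib₃ R M N P T' (m ⊗ₜ (n ⊗ₜ p)) :=
  ⟨by rintro rfl _ _ _; rfl, fun h => dualDistrib₃_injective (ext_threefold' h)⟩

end TensorProduct

section DualPrebialgebra

variable {R H : Type} [CommRing R] [Ring H] [Algebra R H]

def IsMulDual (Δs : (H →ₗ[R] R) →ₗ[R] (H →ₗ[R] R) ⊗[R] (H →ₗ[R] R)) : Prop :=
  ∀ (φ : H →ₗ[R] R) (h k : H), dualDistrib R H H (Δs φ) (k ⊗ₜ h) = φ (h * k)

variable {Δs : (H →ₗ[R] R) →ₗ[R] (H →ₗ[R] R) ⊗[R] (H →ₗ[R] R)}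

theorem IsMulDual.dualDistrib₃_map_id_apply (hΔs : IsMulDual Δs)
    (T : (H →ₗ[R] R) ⊗[R] (H →ₗ[R] R)) (a b c : H) :
    dualDistrib₃ R H H H (map LinearMap.id Δs T) (a ⊗ₜ (b ⊗ₜ c)) =
      dualDistrib R H H T (a ⊗ₜ (c * b)) := by
  induction T using TensorProduct.induction_on with
  | zero => simp
  | add u v hu hv => simp only [map_add, LinearMap.add_apply, hu, hv]
  | tmul φ ψ =>
    simp only [dualDistrib₃, TensorProduct.map_tmul, LinearMap.comp_apply, LinearMap.lTensor_tmul,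
      LinearMap.id_coe, id_eq, dualDistrib_apply]
    rw [hΔs]

theorem IsMulDual.dualDistrib₃_lc_lhs_apply (hΔs : IsMulDual Δs) (φ : H →ₗ[R] R) (a b c : H) :
    dualDistrib₃ R H H H (map LinearMap.id Δs (Δs φ)) (a ⊗ₜ (b ⊗ₜ c)) = φ (c * b * a) := by
  rw [hΔs.dualDistrib₃_map_id_apply, hΔs]

variable [Coalgebra R H]

theorem dualDistrib₃_map_convOp_apply (T T' : (H →ₗ[R] R) ⊗[R] (H →ₗ[R] R)) (a b c : H) :
    dualDistrib₃ R H H H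
        (map LinearMap.id (map (convOp R H) LinearMap.id ∘ₗ
          (TensorProduct.assoc R _ _ _).symm.toLinearMap)
          (TensorProduct.assoc R _ _ _ (T ⊗ₜ T'))) (a ⊗ₜ (b ⊗ₜ c)) =
      LinearMap.mul' R R
        (map (dualDistrib R H H T' ∘ₗ (mk R H H).flip c) (dualDistrib R H H T ∘ₗ mk R H H a)
          (comul b)) := by
  induction T using TensorProduct.induction_on with
  | zero => simp
  | add u v hu hv =>
    simp only [add_tmul, map_add, LinearMap.add_apply, hu, hv, LinearMap.add_comp, map_add_right]
  | tmul φ ψ =>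
    induction T' using TensorProduct.induction_on with
    | zero => simp
    | add u v hu hv =>
      simp only [tmul_add, map_add, LinearMap.add_apply, hu, hv, LinearMap.add_comp, map_add_left]
    | tmul φ' ψ' =>
      have hl : dualDistrib R H H (φ' ⊗ₜ ψ') ∘ₗ (mk R H H).flip c = ψ' c • φ' := by
        ext; simp [dualDistrib_apply, mul_comm]
      have hr : dualDistrib R H H (φ ⊗ₜ ψ) ∘ₗ mk R H H a = φ a • ψ := by
        ext; simp [dualDistrib_apply]
      rw [hl, hr, map_smul_left, map_smul_right]
      simp only [dualDistrib₃, convOp, assoc_tmul, map_tmul, LinearMap.id_coe, id_eq,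
        LinearMap.coe_comp, LinearEquiv.coe_coe, Function.comp_apply, assoc_symm_tmul, comm_tmul,
        dualDistrib_tmul_eq_mul'_comp_map, LinearMap.lTensor_tmul, LinearMap.lcomp_apply,
        LinearMap.mul'_apply, LinearMap.smul_apply, map_smul, smul_eq_mul]
      ring

theorem IsMulDual.dualDistrib₃_lc_rhs_apply (hΔs : IsMulDual Δs) (φ : H →ₗ[R] R) (a b c : H) :
    dualDistrib₃ R H H H
        (map LinearMap.id (map (convOp R H) LinearMap.id ∘ₗ
          (TensorProduct.assoc R _ _ _).symm.toLinearMap)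
          (TensorProduct.assoc R _ _ _ (Δs φ ⊗ₜ Δs φ))) (a ⊗ₜ (b ⊗ₜ c)) =
      LinearMap.mul' R R
        (map (φ ∘ₗ LinearMap.mulLeft R c) (φ ∘ₗ LinearMap.mulRight R a) (comul b)) := by
  rw [dualDistrib₃_map_convOp_apply]
  congr 3 <;> ext <;> apply hΔs

end DualPrebialgebra

theorem finite_lm_iff_dual_lc_general
    (R H : Type) [CommRing R] [Ring H] [Algebra R H] [Coalgebra R H]
    [Module.Finite R H] [Module.Projective R H]
    (Δs : (H →ₗ[R] R) →ₗ[R] (H →ₗ[R] R) ⊗[R] (H →ₗ[R] R))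
    (hΔs : ∀ (φ : H →ₗ[R] R) (h k : H),
      TensorProduct.dualDistrib R H H (Δs φ) (k ⊗ₜ[R] h) = φ (h * k)) :
    LM R H ↔
      (TensorProduct.map LinearMap.id Δs) (Δs (Coalgebra.counit (R := R))) =
        (TensorProduct.map LinearMap.id
            ((TensorProduct.map (convOp R H) LinearMap.id) ∘ₗ
              (TensorProduct.assoc R (H →ₗ[R] R) (H →ₗ[R] R) (H →ₗ[R] R)).symm.toLinearMap))
          ((TensorProduct.assoc R (H →ₗ[R] R) (H →ₗ[R] R)
              ((H →ₗ[R] R) ⊗[R] (H →ₗ[R] R)))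
            (Δs (Coalgebra.counit (R := R)) ⊗ₜ[R] Δs (Coalgebra.counit (R := R)))) := by
  rw [TensorProduct.eq_iff_forall_dualDistrib₃_tmul]
  simp only [IsMulDual.dualDistrib₃_lc_lhs_apply hΔs, IsMulDual.dualDistrib₃_lc_rhs_apply hΔs]
  exact ⟨fun hLM a b c => hLM c b a, fun hLC c b a => hLC a b c⟩

/-- A finite (finitely generated projective) prebialgebra `H` satisfies
(lm) if and only if the dual prebialgebra `H*` (with opposite convolution product and
comultiplication `Δ*` dual to the multiplication of `H`) satisfies (lc), i.e.
`Δ*²(ε) = ε₍₁₎ ⊗ ε₍₂₎ε₍₁'₎ ⊗ ε₍₂'₎`. -/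
theorem finite_lm_iff_dual_lc
    (R H : Type) [CommRing R] [Ring H] [Algebra R H] [Coalgebra R H]
    [Module.Finite R H] [Module.Projective R H]
    (hpre : ComulMul R H)
    (Δs : (H →ₗ[R] R) →ₗ[R] (H →ₗ[R] R) ⊗[R] (H →ₗ[R] R))
    (hΔs : ∀ (φ : H →ₗ[R] R) (h k : H),
      TensorProduct.dualDistrib R H H (Δs φ) (k ⊗ₜ[R] h) = φ (h * k)) :
    LM R H ↔
      (TensorProduct.map LinearMap.id Δs) (Δs (Coalgebra.counit (R := R))) =
        (TensorProduct.map LinearMap.id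
            ((TensorProduct.map (convOp R H) LinearMap.id) ∘ₗ
              (TensorProduct.assoc R (H →ₗ[R] R) (H →ₗ[R] R) (H →ₗ[R] R)).symm.toLinearMap))
          ((TensorProduct.assoc R (H →ₗ[R] R) (H →ₗ[R] R)
              ((H →ₗ[R] R) ⊗[R] (H →ₗ[R] R)))
            (Δs (Coalgebra.counit (R := R)) ⊗ₜ[R] Δs (Coalgebra.counit (R := R)))) :=
  finite_lm_iff_dual_lc_general R H Δs hΔs
end

section
/- Let H be a prebialgebra and define ε_t(h) = ε(1₍₁₎h)1₍₂₎. Then H satisfies the right monoidality axiom (rm): ε(hkl) = ε(hk₍₂₎)ε(k₍₁₎l) for all h,k,l ∈ H, if and only if h·ε_t(g) = ε(h₍₁₎g)h₍₂₎ for all h,g ∈ H. -/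
open TensorProduct Coalgebra

/-!
Given (rm), `ε(h₍₁₎g)h₍₂₎ = ε(h₍₁₎1₍₁₎g)h₍₂₎1₍₂₎ = ε(1₍₁₎₍₁₎g)ε(h₍₁₎1₍₁₎₍₂₎)h₍₂₎1₍₂₎`, and by
coassociativity this is `ε(1₍₁₎g)ε(h₍₁₎1₍₂₎₍₁₎)h₍₂₎1₍₂₎₍₂₎ = ε(1₍₁₎g)h1₍₂₎ = hε_t(g)`, since
`Δ(h1₍₂₎) = Δ(h)Δ(1₍₂₎)`. Conversely, the identity gives `ε(xε_t(l)) = ε(x₍₁₎l)ε(x₍₂₎) = ε(xl)`, whence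
`ε(hkl) = ε(h·kε_t(l)) = ε(k₍₁₎l)ε(hk₍₂₎)`.
-/

section CounitContract

variable {R H : Type*} [CommSemiring R] [Semiring H] [Algebra R H] [Coalgebra R H]

local notation "ε" => Coalgebra.counit (R := R) (A := H)
local notation "Δ" => Coalgebra.comul (R := R) (A := H)

/-- `counitContract z x = ε(z₁x₁) z₂x₂`, so that `ε_t(g) = counitContract Δ(1) (g ⊗ 1)` and
`ε(h₍₁₎g)h₍₂₎ = counitContract Δ(h) (g ⊗ 1)`. -/
noncomputable def counitContract : H ⊗[R] H →ₗ[R] H ⊗[R] H →ₗ[R] H :=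
  (LinearMap.mul R (H ⊗[R] H)).compr₂ ((TensorProduct.lid R H).toLinearMap ∘ₗ LinearMap.rTensor H ε)

@[simp]
lemma counitContract_tmul_tmul (a b v w : H) :
    counitContract (a ⊗ₜ[R] b) (v ⊗ₜ w) = ε (a * v) • (b * w) := by
  simp [counitContract]

lemma counitContract_mul (z z' x : H ⊗[R] H) :
    counitContract (z * z') x = counitContract z (z' * x) := by
  simp [counitContract, mul_assoc]

lemma mul_counitContract_tmul_one (h g : H) (z : H ⊗[R] H) :
    h * counitContract z (g ⊗ₜ 1) =
      TensorProduct.lid R H (TensorProduct.map (ε ∘ₗ LinearMap.mulRight R g)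
        (LinearMap.mulLeft R h) z) := by
  induction z using TensorProduct.induction_on with
  | zero => simp
  | tmul a b => simp
  | add z z' hz hz' => simp [mul_add, hz, hz']

lemma counit_mul_counitContract_tmul_one (h l : H) (z : H ⊗[R] H) :
    ε (h * counitContract z (l ⊗ₜ 1)) =
      LinearMap.mul' R R (TensorProduct.map (ε ∘ₗ LinearMap.mulRight R l)
        (ε ∘ₗ LinearMap.mulLeft R h) z) := by
  induction z using TensorProduct.induction_on with
  | zero => simp
  | tmul a b => simp
  | add z z' hz hz' => simp [mul_add, hz, hz']

lemma counit_counitContract_comul_tmul_one (x l : H) :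
    ε (counitContract (Δ x) (l ⊗ₜ 1)) = ε (x * l) := by
  have hmap : TensorProduct.map (ε ∘ₗ LinearMap.mulRight R l) ε (Δ x) =
      TensorProduct.map (ε ∘ₗ LinearMap.mulRight R l) LinearMap.id (LinearMap.lTensor H ε (Δ x)) := by
    rw [LinearMap.map_lTensor, LinearMap.id_comp]
  simpa [LinearMap.mulLeft_one, hmap, Coalgebra.lTensor_counit_comul] using
    counit_mul_counitContract_tmul_one (1 : H) l (Δ x)

lemma lid_map_counitContract_tmul_assoc_tmul (g a b w : H) (t : H ⊗[R] H) :
    TensorProduct.lid R H (TensorProduct.map (ε ∘ₗ LinearMap.mulRight R g)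
        (counitContract (a ⊗ₜ b)) (TensorProduct.assoc R H H H (t ⊗ₜ w))) =
      LinearMap.mul' R R (TensorProduct.map (ε ∘ₗ LinearMap.mulRight R g)
        (ε ∘ₗ LinearMap.mulLeft R a) t) • (b * w) := by
  induction t using TensorProduct.induction_on with
  | zero => simp
  | tmul p q => simp [smul_smul, mul_comm]
  | add t t' ht ht' => simp [TensorProduct.add_tmul, add_smul, ht, ht']

end CounitContract

section TargetMap

variable {R H : Type} [CommRing R] [Ring H] [Algebra R H] [Coalgebra R H]

local notation "ε" => Coalgebra.counit (R := R) (A := H)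
local notation "Δ" => Coalgebra.comul (R := R) (A := H)

lemma epsT_eq_counitContract (g : H) : epsT R H g = counitContract (Δ 1) (g ⊗ₜ 1) := rfl

lemma mul_eq_counitContract_comul (hpre : ComulMul R H) (h x : H) :
    h * x = counitContract (Δ h) (Δ x) := by
  change h * x = TensorProduct.lid R H (LinearMap.rTensor H ε (Δ h * Δ x))
  rw [← hpre, Coalgebra.rTensor_counit_comul, TensorProduct.lid_tmul, one_smul]

lemma comul_mul_comul_one (hpre : ComulMul R H) (h : H) : Δ h * Δ 1 = Δ h := by
  rw [← hpre, mul_one]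

lemma RM.lid_map_counitContract_assoc_rTensor_comul (hRM : RM R H) (g : H) (z x : H ⊗[R] H) :
    TensorProduct.lid R H (TensorProduct.map (ε ∘ₗ LinearMap.mulRight R g) (counitContract z)
        (TensorProduct.assoc R H H H (LinearMap.rTensor H Δ x))) =
      counitContract z (LinearMap.rTensor H (LinearMap.mulRight R g) x) := by
  induction z using TensorProduct.induction_on with
  | zero => simp
  | add z z' hz hz' => simp [TensorProduct.map_add_right, hz, hz']
  | tmul a b =>
    induction x using TensorProduct.induction_on with
    | zero => simp
    | add x x' hx hx' => simp [hx, hx']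
    | tmul u w =>
      rw [LinearMap.rTensor_tmul, lid_map_counitContract_tmul_assoc_tmul, LinearMap.rTensor_tmul,
        counitContract_tmul_tmul, LinearMap.mulRight_apply, ← mul_assoc, hRM]

lemma lid_map_counitContract_lTensor_comul_one (hpre : ComulMul R H) (h g : H) :
    TensorProduct.lid R H (TensorProduct.map (ε ∘ₗ LinearMap.mulRight R g) (counitContract (Δ h))
        (LinearMap.lTensor H Δ (Δ 1))) = h * epsT R H g := by
  have hcomul : counitContract (Δ h) ∘ₗ Δ = LinearMap.mulLeft R h :=
    LinearMap.ext fun x => (mul_eq_counitContract_comul hpre h x).symm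
  rw [epsT_eq_counitContract, mul_counitContract_tmul_one, LinearMap.map_lTensor, hcomul]

lemma RM.counitContract_comul_tmul_one (hpre : ComulMul R H) (hRM : RM R H) (h g : H) :
    counitContract (Δ h) (g ⊗ₜ 1) = h * epsT R H g := by
  have hmul : Δ 1 * (g ⊗ₜ[R] 1) = LinearMap.rTensor H (LinearMap.mulRight R g) (Δ 1) := by
    rw [← LinearMap.mulRight_apply (R := R), LinearMap.mulRight_tmul, LinearMap.mulRight_one]
    rfl
  calc counitContract (Δ h) (g ⊗ₜ 1)
      = counitContract (Δ h) (LinearMap.rTensor H (LinearMap.mulRight R g) (Δ 1)) := by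
        rw [← hmul, ← counitContract_mul, comul_mul_comul_one hpre]
    _ = TensorProduct.lid R H (TensorProduct.map (ε ∘ₗ LinearMap.mulRight R g)
          (counitContract (Δ h)) (LinearMap.lTensor H Δ (Δ 1))) := by
        rw [← Coalgebra.coassoc_apply, hRM.lid_map_counitContract_assoc_rTensor_comul]
    _ = h * epsT R H g := lid_map_counitContract_lTensor_comul_one hpre h g

lemma rm_of_mul_epsT (hP : ∀ h g : H, h * epsT R H g = counitContract (Δ h) (g ⊗ₜ 1)) :
    RM R H := by
  intro h k l
  calc ε (h * k * l) = ε (h * k * epsT R H l) := by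
        rw [hP, counit_counitContract_comul_tmul_one]
    _ = ε (h * counitContract (Δ k) (l ⊗ₜ 1)) := by rw [mul_assoc, hP]
    _ = _ := counit_mul_counitContract_tmul_one h l (Δ k)

end TargetMap

/-- For a prebialgebra `H`, (rm) holds iff
`h·ε_t(g) = ε(h₍₁₎g)h₍₂₎` for all `h,g ∈ H`. -/
theorem rm_iff_epsT_mul
    (R H : Type) [CommRing R] [Ring H] [Algebra R H] [Coalgebra R H]
    (hpre : ComulMul R H) :
    RM R H ↔
      ∀ h g : H,
        h * epsT R H g =
          (TensorProduct.lid R H)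
            ((TensorProduct.map Coalgebra.counit LinearMap.id)
              (Coalgebra.comul (R := R) h * (g ⊗ₜ[R] (1 : H)))) :=
  ⟨fun hRM h g => (hRM.counitContract_comul_tmul_one hpre h g).symm, rm_of_mul_epsT⟩
end

section
/- Let H be a prebialgebra and define ε_t(h) = ε(1₍₁₎h)1₍₂₎. Then H satisfies the right comonoidality axiom (rc): Δ²(1) = 1₍₁₎ ⊗ 1₍₁'₎1₍₂₎ ⊗ 1₍₂'₎, if and only if h₍₁₎ ⊗ ε_t(h₍₂₎) = 1₍₁₎h ⊗ 1₍₂₎ for all h ∈ H. -/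
open TensorProduct Coalgebra

/-! Write `L(y) = 1₍₁₎y ⊗ 1₍₂₎`, so that `ε_t = (ε ⊗ id) ∘ L` and (rc) reads
`Δ²(1) = (id ⊗ L)Δ(1)`. If (rc) holds, then, since `Δ(h) = Δ(1)Δ(h)` and `id ⊗ L` is right linear
along `t ↦ t ⊗ 1`, `(id ⊗ ε_t)Δ(h)` is `ε` applied to the middle factor of
`Δ²(1)(h₍₁₎ ⊗ h₍₂₎ ⊗ 1)`. By coassociativity and multiplicativity of `Δ` this product is
`(Δ ⊗ id)(1₍₁₎h ⊗ 1₍₂₎)`, and the counit law returns `1₍₁₎h ⊗ 1₍₂₎`. Conversely, the identity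
says `L = (id ⊗ ε_t) ∘ Δ`, so `(id ⊗ L)Δ(1) = (id ⊗ id ⊗ ε_t)Δ²(1)`, and its case `h = 1` together
with coassociativity shows that `id ⊗ id ⊗ ε_t` fixes `Δ²(1)`. -/

section RightComonoidality

open Algebra.TensorProduct (includeLeft)

variable {R H : Type} [CommRing R] [Ring H] [Algebra R H] [Coalgebra R H]

theorem LinearMap.rTensor_mul_of_map_mul {A B C : Type*} [Ring A] [Algebra R A] [Ring B]
    [Algebra R B] [Ring C] [Algebra R C] (f : A →ₗ[R] B) (hf : ∀ a b, f (a * b) = f a * f b)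
    (x y : A ⊗[R] C) : f.rTensor C (x * y) = f.rTensor C x * f.rTensor C y := by
  induction x using TensorProduct.induction_on with
  | zero => simp
  | add x x' hx hx' => simp only [add_mul, map_add, hx, hx']
  | tmul a c =>
    induction y using TensorProduct.induction_on with
    | zero => simp
    | add y y' hy hy' => simp only [mul_add, map_add, hy, hy']
    | tmul b d => simp [hf]

variable (R H) in
noncomputable def comulOneMul : H →ₗ[R] H ⊗[R] H :=
  LinearMap.mulLeft R (comul 1) ∘ₗ (includeLeft : H →ₐ[R] H ⊗[R] H).toLinearMap

@[simp]
theorem comulOneMul_apply (y : H) : comulOneMul R H y = comul 1 * (y ⊗ₜ[R] 1) := rfl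

theorem epsT_eq_comp :
    epsT R H = ((TensorProduct.lid R H).toLinearMap ∘ₗ counit.rTensor H) ∘ₗ comulOneMul R H :=
  rfl

theorem lTensor_comulOneMul_mul (s t : H ⊗[R] H) :
    (comulOneMul R H).lTensor H (s * t) =
      (comulOneMul R H).lTensor H s * (includeLeft : H →ₐ[R] H ⊗[R] H).toLinearMap.lTensor H t := by
  induction s using TensorProduct.induction_on with
  | zero => simp
  | add s s' hs hs' => simp only [add_mul, map_add, hs, hs']
  | tmul a b =>
    induction t using TensorProduct.induction_on with
    | zero => simp
    | add t t' ht ht' => simp only [mul_add, map_add, ht, ht']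
    | tmul c d => simp [mul_assoc]

theorem d1Right_mul_d1Left : d1Right R H * d1Left R H = (comulOneMul R H).lTensor H (comul 1) := by
  suffices ∀ s : H ⊗[R] H, (1 : H) ⊗ₜ[R] comul (R := R) (1 : H) *
      (includeLeft : H →ₐ[R] H ⊗[R] H).toLinearMap.lTensor H s = (comulOneMul R H).lTensor H s from
    this _
  intro s
  induction s using TensorProduct.induction_on with
  | zero => simp
  | add s s' hs hs' => simp only [mul_add, map_add, hs, hs']
  | tmul a b => simp

theorem comulSq1_eq_assoc : comulSq1 R H =
    TensorProduct.assoc R H H H (comul.rTensor H (comul 1)) :=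
  (coassoc_apply 1).symm

theorem TensorProduct.assoc_mul {A B C : Type*} [Ring A] [Algebra R A] [Ring B] [Algebra R B]
    [Ring C] [Algebra R C] (x y : (A ⊗[R] B) ⊗[R] C) :
    TensorProduct.assoc R A B C (x * y) =
      TensorProduct.assoc R A B C x * TensorProduct.assoc R A B C y :=
  map_mul (Algebra.TensorProduct.assoc R R R A B C) x y

omit [Coalgebra R H] in
theorem assoc_tmul_one (s : H ⊗[R] H) :
    TensorProduct.assoc R H H H (s ⊗ₜ[R] 1) =
      (includeLeft : H →ₐ[R] H ⊗[R] H).toLinearMap.lTensor H s := by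
  induction s using TensorProduct.induction_on with
  | zero => simp
  | add s s' hs hs' => simp only [add_tmul, map_add, hs, hs']
  | tmul a b => simp

theorem lTensor_counit_assoc_rTensor_comul {N : Type*} [AddCommGroup N] [Module R N]
    (x : H ⊗[R] N) :
    ((TensorProduct.lid R N).toLinearMap ∘ₗ counit.rTensor N).lTensor H
      (TensorProduct.assoc R H H N (comul.rTensor N x)) = x := by
  have hcounit (s : H ⊗[R] H) (n : N) :
      ((TensorProduct.lid R N).toLinearMap ∘ₗ counit.rTensor N).lTensor H
        (TensorProduct.assoc R H H N (s ⊗ₜ[R] n)) =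
        TensorProduct.rid R H (counit.lTensor H s) ⊗ₜ[R] n := by
    induction s using TensorProduct.induction_on with
    | zero => simp
    | add s s' hs hs' => simp only [add_tmul, map_add, hs, hs']
    | tmul a b => simp [TensorProduct.smul_tmul']
  induction x using TensorProduct.induction_on with
  | zero => simp
  | add x x' hx hx' => simp only [map_add, hx, hx']
  | tmul a n => simp [hcounit]

theorem lTensor_counit_comulSq1_mul (hpre : ComulMul R H) (h : H) :
    ((TensorProduct.lid R H).toLinearMap ∘ₗ counit.rTensor H).lTensor H
      (comulSq1 R H * (includeLeft : H →ₐ[R] H ⊗[R] H).toLinearMap.lTensor H (comul h)) =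
      comul 1 * (h ⊗ₜ[R] 1) := by
  rw [comulSq1_eq_assoc, ← assoc_tmul_one, ← LinearMap.rTensor_tmul, ← TensorProduct.assoc_mul,
    ← LinearMap.rTensor_mul_of_map_mul _ hpre, lTensor_counit_assoc_rTensor_comul]

theorem lTensor_lTensor_comulSq1_eq_self (f : H →ₗ[R] H) (hf : f.lTensor H (comul 1) = comul 1) :
    (f.lTensor H).lTensor H (comulSq1 R H) = comulSq1 R H := by
  conv_rhs => rw [comulSq1_eq_assoc, ← hf]
  calc (f.lTensor H).lTensor H (comulSq1 R H)
      = TensorProduct.assoc R H H H ((f.lTensor (H ⊗[R] H)) (comul.rTensor H (comul 1))) := by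
        rw [LinearMap.lTensor_tensor, comulSq1_eq_assoc]
        simp
    _ = TensorProduct.assoc R H H H (comul.rTensor H (f.lTensor H (comul 1))) := by
        rw [← LinearMap.comp_apply (f.lTensor (H ⊗[R] H)), LinearMap.lTensor_comp_rTensor,
          ← LinearMap.rTensor_comp_lTensor, LinearMap.comp_apply]

theorem lTensor_epsT_comul_of_rc (hpre : ComulMul R H) (hrc : RC R H) (h : H) :
    (epsT R H).lTensor H (comul h) = comul 1 * (h ⊗ₜ[R] 1) := by
  have hcomul : comul (R := R) h = comul 1 * comul h := by rw [← hpre, one_mul]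
  rw [RC, d1Right_mul_d1Left] at hrc
  rw [epsT_eq_comp, LinearMap.lTensor_comp_apply, hcomul, lTensor_comulOneMul_mul, ← hrc,
    lTensor_counit_comulSq1_mul hpre]

theorem rc_of_lTensor_epsT_comul
    (h : ∀ y : H, (epsT R H).lTensor H (comul y) = comul 1 * (y ⊗ₜ[R] 1)) : RC R H := by
  have hL : comulOneMul R H = (epsT R H).lTensor H ∘ₗ comul := LinearMap.ext fun y => (h y).symm
  have hone : (epsT R H).lTensor H (comul 1) = comul 1 := by
    rw [h, ← Algebra.TensorProduct.one_def, mul_one]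
  rw [RC, d1Right_mul_d1Left, hL, LinearMap.lTensor_comp_apply]
  exact (lTensor_lTensor_comulSq1_eq_self _ hone).symm

end RightComonoidality

/-- For a prebialgebra `H`, (rc) holds iff
`h₍₁₎ ⊗ ε_t(h₍₂₎) = 1₍₁₎h ⊗ 1₍₂₎` for all `h ∈ H`. -/
theorem rc_iff_epsT_comul
    (R H : Type) [CommRing R] [Ring H] [Algebra R H] [Coalgebra R H]
    (hpre : ComulMul R H) :
    RC R H ↔
      ∀ h : H,
        (TensorProduct.map LinearMap.id (epsT R H)) (Coalgebra.comul (R := R) h) =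
          Coalgebra.comul (R := R) (1 : H) * (h ⊗ₜ[R] (1 : H)) :=
  ⟨lTensor_epsT_comul_of_rc hpre, rc_of_lTensor_epsT_comul⟩
end

section
/- Let H be a prebialgebra satisfying the right comonoidality axiom (rc): Δ²(1) = 1₍₁₎ ⊗ 1₍₁'₎1₍₂₎ ⊗ 1₍₂'₎. Then I_t = H_t = H_L, where I_t = {h ∈ H : Δ(h) = 1₍₁₎h ⊗ 1₍₂₎}, H_t = Im(ε_t) with ε_t(h) = ε(1₍₁₎h)1₍₂₎, and H_L = {⟨h*,1₍₁₎⟩1₍₂₎ : h* ∈ H*}. -/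
open TensorProduct Coalgebra

/-!
Applying `ε ⊗ id` to `Δ(h) = 1₍₁₎h ⊗ 1₍₂₎` gives `ε_t(h) = h`, so `I_t ⊆ H_t`. Since
`ε_t = f ∘ g`, `H_t ⊆ H_L`. Finally, applying `h* ⊗ id ⊗ id` to (rc) yields
`Δ(f(h*)) = 1₍₁₎f(h*) ⊗ 1₍₂₎`, so `H_L ⊆ I_t`.
-/

theorem TensorProduct.lid_rTensor_lTensor {R M N P : Type} [CommRing R] [AddCommGroup M]
    [Module R M] [AddCommGroup N] [Module R N] [AddCommGroup P] [Module R P]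
    (φ : M →ₗ[R] R) (g : N →ₗ[R] P) (x : M ⊗[R] N) :
    TensorProduct.lid R P (LinearMap.rTensor P φ (LinearMap.lTensor M g x)) =
      g (TensorProduct.lid R N (LinearMap.rTensor N φ x)) := by
  induction x with
  | zero => simp
  | tmul m n => simp
  | add x y hx hy => simp only [map_add, hx, hy]

section TensorAlgebra

variable {R A B : Type} [CommRing R] [Ring A] [Algebra R A] [Ring B] [Algebra R B]

theorem Algebra.TensorProduct.mul_tmul_one_eq_rTensor_mulRight (x : A ⊗[R] B) (a : A) :
    x * (a ⊗ₜ[R] (1 : B)) = LinearMap.rTensor B (LinearMap.mulRight R a) x := by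
  induction x with
  | zero => simp
  | tmul a' b => simp
  | add x y hx hy => simp [add_mul, hx, hy]

theorem Algebra.TensorProduct.lid_rTensor_one_tmul_mul (φ : A →ₗ[R] R) (b : B)
    (x : A ⊗[R] B) :
    _root_.TensorProduct.lid R B (LinearMap.rTensor B φ (((1 : A) ⊗ₜ[R] b) * x)) =
      b * _root_.TensorProduct.lid R B (LinearMap.rTensor B φ x) := by
  induction x with
  | zero => simp
  | tmul a' b' => simp
  | add x y hx hy => simp [mul_add, hx, hy]

end TensorAlgebra

section Prebialgebra

variable {R H : Type} [CommRing R] [Ring H] [Algebra R H] [Coalgebra R H]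

theorem epsT_eq_fmap_gmap (h : H) : epsT R H h = fmap R H (gmap R H h) :=
  calc epsT R H h
      = TensorProduct.lid R H (LinearMap.rTensor H counit (comul 1 * (h ⊗ₜ[R] (1 : H)))) := rfl
    _ = TensorProduct.lid R H (LinearMap.rTensor H counit
          (LinearMap.rTensor H (LinearMap.mulRight R h) (comul 1))) := by
      rw [Algebra.TensorProduct.mul_tmul_one_eq_rTensor_mulRight]
    _ = fmap R H (gmap R H h) := by
      rw [← LinearMap.rTensor_comp_apply]
      rfl

theorem epsT_eq_self_of_comul_eq {h : H}
    (hh : comul (R := R) h = comul (R := R) (1 : H) * (h ⊗ₜ[R] (1 : H))) :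
    epsT R H h = h :=
  calc epsT R H h
      = TensorProduct.lid R H (LinearMap.rTensor H counit (comul 1 * (h ⊗ₜ[R] (1 : H)))) := rfl
    _ = h := by rw [← hh, Coalgebra.rTensor_counit_comul, TensorProduct.lid_tmul, one_smul]

theorem comul_fmap (hrc : RC R H) (φ : H →ₗ[R] R) :
    comul (R := R) (fmap R H φ) = comul (R := R) (1 : H) * (fmap R H φ ⊗ₜ[R] (1 : H)) := by
  have h := congrArg (fun x => TensorProduct.lid R (H ⊗[R] H) (LinearMap.rTensor _ φ x)) hrc
  simp only [comulSq1, d1Right, d1Left, ← LinearMap.lTensor_def,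
    Algebra.TensorProduct.lid_rTensor_one_tmul_mul, TensorProduct.lid_rTensor_lTensor] at h
  exact h

end Prebialgebra

theorem rc_It_eq_Ht_eq_HL_general
    (R H : Type) [CommRing R] [Ring H] [Algebra R H] [Coalgebra R H]
    (hrc : RC R H) :
    {h : H | Coalgebra.comul (R := R) h =
        Coalgebra.comul (R := R) (1 : H) * (h ⊗ₜ[R] (1 : H))} =
      Set.range (epsT R H) ∧
    Set.range (epsT R H) = Set.range (fmap R H) := by
  set It := {h : H | comul (R := R) h = comul (R := R) (1 : H) * (h ⊗ₜ[R] (1 : H))}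
  have It_sub_Ht : It ⊆ Set.range (epsT R H) := fun h hh => ⟨h, epsT_eq_self_of_comul_eq hh⟩
  have Ht_sub_HL : Set.range (epsT R H) ⊆ Set.range (fmap R H) := by
    rintro _ ⟨h, rfl⟩
    exact ⟨gmap R H h, (epsT_eq_fmap_gmap h).symm⟩
  have HL_sub_It : Set.range (fmap R H) ⊆ It := by
    rintro _ ⟨φ, rfl⟩
    exact comul_fmap hrc φ
  exact ⟨It_sub_Ht.antisymm (Ht_sub_HL.trans HL_sub_It),
    Ht_sub_HL.antisymm (HL_sub_It.trans It_sub_Ht)⟩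

/-- If a prebialgebra `H` satisfies (rc) then `I_t = H_t = H_L`. -/
theorem rc_It_eq_Ht_eq_HL
    (R H : Type) [CommRing R] [Ring H] [Algebra R H] [Coalgebra R H]
    (hpre : ComulMul R H) (hrc : RC R H) :
    {h : H | Coalgebra.comul (R := R) h =
        Coalgebra.comul (R := R) (1 : H) * (h ⊗ₜ[R] (1 : H))} =
      Set.range (epsT R H) ∧
    Set.range (epsT R H) = Set.range (fmap R H) :=
  rc_It_eq_Ht_eq_HL_general R H hrc
end

section
/- In any prebialgebra H, one has ε_s(1₍₁₎) ⊗ 1₍₂₎ = 1₍₁₎ ⊗ ε_t(1₍₂₎), where ε_t(h) = ε(1₍₁₎h)1₍₂₎ and ε_s(h) = ε(h1₍₂₎)1₍₁₎. -/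
/-!
For `s t : H ⊗ H` and a linear functional `f`, the maps `rightContract f s x = (id ⊗ f)((1 ⊗ x) s)` and
`leftContract f t x = (f ⊗ id)(t (x ⊗ 1))` specialise to `ε_s` and `ε_t` at `f = ε`, `s = t = Δ(1)`.
The identity `(rightContract f s ⊗ id)(t) = (id ⊗ leftContract f t)(s)` is biadditive in `(s, t)`,
and on pure tensors `s = a ⊗ b`, `t = c ⊗ d` both sides are `f(c b) a ⊗ d`.
-/

open TensorProduct Coalgebra

section Contract

variable {R H : Type*} [CommRing R] [Ring H] [Algebra R H]

noncomputable def rightContract (f : H →ₗ[R] R) (s : H ⊗[R] H) : H →ₗ[R] H :=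
  (TensorProduct.rid R H).toLinearMap ∘ₗ
    TensorProduct.map LinearMap.id f ∘ₗ
    LinearMap.mulRight R s ∘ₗ
    Algebra.TensorProduct.includeRight.toLinearMap

noncomputable def leftContract (f : H →ₗ[R] R) (t : H ⊗[R] H) : H →ₗ[R] H :=
  (TensorProduct.lid R H).toLinearMap ∘ₗ
    TensorProduct.map f LinearMap.id ∘ₗ
    LinearMap.mulLeft R t ∘ₗ
    Algebra.TensorProduct.includeLeft.toLinearMap

theorem rightContract_add (f : H →ₗ[R] R) (s₁ s₂ : H ⊗[R] H) :
    rightContract f (s₁ + s₂) = rightContract f s₁ + rightContract f s₂ := by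
  ext x
  simp [rightContract, mul_add]

theorem leftContract_add (f : H →ₗ[R] R) (t₁ t₂ : H ⊗[R] H) :
    leftContract f (t₁ + t₂) = leftContract f t₁ + leftContract f t₂ := by
  ext x
  simp [leftContract, add_mul]

theorem map_rightContract_id_eq_map_id_leftContract (f : H →ₗ[R] R) (s t : H ⊗[R] H) :
    TensorProduct.map (rightContract f s) LinearMap.id t =
      TensorProduct.map LinearMap.id (leftContract f t) s := by
  induction s using TensorProduct.induction_on with
  | zero => simp [rightContract]
  | add s₁ s₂ h₁ h₂ => rw [rightContract_add, map_add_left, LinearMap.add_apply, h₁, h₂, map_add]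
  | tmul a b =>
    induction t using TensorProduct.induction_on with
    | zero => simp [leftContract]
    | add t₁ t₂ h₁ h₂ =>
      rw [leftContract_add, map_add_right, LinearMap.add_apply, ← h₁, ← h₂, map_add]
    | tmul c d =>
      simp [rightContract, leftContract, Algebra.TensorProduct.tmul_mul_tmul, TensorProduct.smul_tmul]

end Contract

theorem epsS_one_tmul_eq_general
    (R H : Type) [CommRing R] [Ring H] [Algebra R H] [Coalgebra R H] :
    (TensorProduct.map (epsS R H) LinearMap.id) (Coalgebra.comul (R := R) (1 : H)) =
      (TensorProduct.map LinearMap.id (epsT R H)) (Coalgebra.comul (R := R) (1 : H)) :=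
  map_rightContract_id_eq_map_id_leftContract Coalgebra.counit _ _

/-- In any prebialgebra, `ε_s(1₍₁₎) ⊗ 1₍₂₎ = 1₍₁₎ ⊗ ε_t(1₍₂₎)`. -/
theorem epsS_one_tmul_eq
    (R H : Type) [CommRing R] [Ring H] [Algebra R H] [Coalgebra R H]
    (hpre : ComulMul R H) :
    (TensorProduct.map (epsS R H) LinearMap.id) (Coalgebra.comul (R := R) (1 : H)) =
      (TensorProduct.map LinearMap.id (epsT R H)) (Coalgebra.comul (R := R) (1 : H)) :=
  epsS_one_tmul_eq_general R H
end

section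
/- Let H be a prebialgebra satisfying the right monoidality axiom (rm): ε(hkl)=ε(hk₍₂₎)ε(k₍₁₎l). Then for all h,g ∈ H: ε_t(h)ε_t(g) = ε_t(ε_t(h)g) and ε_s(h)ε_s(g) = ε_s(hε_s(g)). Consequently H_t = Im(ε_t) and H_s = Im(ε_s) are subalgebras of H. -/
open TensorProduct Coalgebra

/-! Write `x ↼ φ = φ(x₁)x₂` and `φ ⇀ x = x₁φ(x₂)` for the hit actions of a functional `φ`
(`rightHit`, `leftHit`), so that `ε_t(a) = 1 ↼ ε(·a)` and `ε_s(h) = ε(h·) ⇀ 1`.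
Coassociativity gives `(x ↼ φ) ↼ ψ = x ↼ (ψ ∘ (· ↼ φ))`, and (rm) reads
`ε(h (k ↼ ε(·l))) = ε(hkl)`. With multiplicativity of `Δ` and the counit axiom this yields
`x ε_t(b) = x ↼ ε(·b)` for every `x`. Hence `ε(·b) ∘ (· ↼ ε(·a)) = ε(· ε_t(a) b)`, and
`ε_t(a) ε_t(b) = (1 ↼ ε(·a)) ↼ ε(·b) = 1 ↼ ε(· ε_t(a) b) = ε_t(ε_t(a) b)`.
The source map is the mirror image, with `ε_s(h) x = ε(h·) ⇀ x`. -/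

section Hits

variable {R H : Type*} [CommSemiring R] [AddCommMonoid H] [Module R H] [Coalgebra R H]

noncomputable def rightHit (φ : H →ₗ[R] R) : H →ₗ[R] H :=
  (TensorProduct.lid R H).toLinearMap ∘ₗ φ.rTensor H ∘ₗ comul

noncomputable def leftHit (φ : H →ₗ[R] R) : H →ₗ[R] H :=
  (TensorProduct.rid R H).toLinearMap ∘ₗ φ.lTensor H ∘ₗ comul

lemma Coalgebra.Repr.rightHit_eq {ι : Type*} {x : H} (𝓡 : Coalgebra.Repr R x ι)
    (φ : H →ₗ[R] R) :
    rightHit φ x = ∑ i ∈ 𝓡.index, φ (𝓡.left i) • 𝓡.right i := by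
  simp [rightHit, ← 𝓡.eq]

lemma Coalgebra.Repr.leftHit_eq {ι : Type*} {x : H} (𝓡 : Coalgebra.Repr R x ι)
    (φ : H →ₗ[R] R) :
    leftHit φ x = ∑ i ∈ 𝓡.index, φ (𝓡.right i) • 𝓡.left i := by
  simp [leftHit, ← 𝓡.eq]

@[simp] lemma rightHit_counit (x : H) : rightHit (R := R) counit x = x := by
  simp [rightHit]

@[simp] lemma leftHit_counit (x : H) : leftHit (R := R) counit x = x := by
  simp [leftHit]

lemma rightHit_rightHit (φ ψ : H →ₗ[R] R) (x : H) :
    rightHit ψ (rightHit φ x) = rightHit (ψ ∘ₗ rightHit φ) x := by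
  have h := congr(((TensorProduct.lid R H).toLinearMap ∘ₗ
      map φ ((TensorProduct.lid R H).toLinearMap ∘ₗ map ψ LinearMap.id))
    $(sum_tmul_tmul_eq (ℛ R x) (fun _ ↦ ℛ R _) (fun _ ↦ ℛ R _)))
  simp only [map_sum, LinearMap.comp_apply, map_tmul, LinearEquiv.coe_coe, lid_tmul,
    LinearMap.id_apply] at h
  rw [(ℛ R x).rightHit_eq φ, (ℛ R x).rightHit_eq, map_sum]
  simp only [map_smul, LinearMap.comp_apply]
  simp only [(ℛ R _).rightHit_eq, map_sum, map_smul, Finset.smul_sum, Finset.sum_smul, smul_smul,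
    smul_eq_mul] at h ⊢
  exact h.symm

lemma leftHit_leftHit (φ ψ : H →ₗ[R] R) (x : H) :
    leftHit ψ (leftHit φ x) = leftHit (ψ ∘ₗ leftHit φ) x := by
  have h := congr(((TensorProduct.rid R H).toLinearMap ∘ₗ
      map ((TensorProduct.rid R H).toLinearMap ∘ₗ map LinearMap.id ψ) φ ∘ₗ
      (TensorProduct.assoc R H H H).symm.toLinearMap)
    $(sum_tmul_tmul_eq (ℛ R x) (fun _ ↦ ℛ R _) (fun _ ↦ ℛ R _)))
  simp only [map_sum, LinearMap.comp_apply, map_tmul, LinearEquiv.coe_coe, rid_tmul,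
    LinearMap.id_apply, TensorProduct.assoc_symm_tmul] at h
  rw [(ℛ R x).leftHit_eq φ, (ℛ R x).leftHit_eq, map_sum]
  simp only [map_smul, LinearMap.comp_apply]
  simp only [(ℛ R _).leftHit_eq, map_sum, map_smul, Finset.smul_sum, Finset.sum_smul, smul_smul,
    smul_eq_mul] at h ⊢
  exact h

end Hits

section Prebialgebra

variable {R H : Type} [CommRing R] [Ring H] [Algebra R H] [Coalgebra R H]

local notation "ε" => Coalgebra.counit (R := R) (A := H)

lemma rightHit_mul (hpre : ComulMul R H) {ι : Type*} {x : H} (𝓡 : Coalgebra.Repr R x ι)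
    (φ : H →ₗ[R] R) (y : H) :
    rightHit φ (x * y) =
      ∑ i ∈ 𝓡.index, 𝓡.right i * rightHit (φ ∘ₗ LinearMap.mulLeft R (𝓡.left i)) y := by
  rw [rightHit, LinearMap.comp_apply, LinearMap.comp_apply, hpre, ← 𝓡.eq, ← (ℛ R y).eq,
    Finset.sum_mul_sum]
  simp [Algebra.TensorProduct.tmul_mul_tmul, (ℛ R y).rightHit_eq, Finset.mul_sum]

lemma leftHit_mul (hpre : ComulMul R H) {ι : Type*} {y : H} (𝓡 : Coalgebra.Repr R y ι)
    (φ : H →ₗ[R] R) (x : H) :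
    leftHit φ (x * y) =
      ∑ i ∈ 𝓡.index, leftHit (φ ∘ₗ LinearMap.mulRight R (𝓡.right i)) x * 𝓡.left i := by
  rw [leftHit, LinearMap.comp_apply, LinearMap.comp_apply, hpre, ← 𝓡.eq, ← (ℛ R x).eq,
    Finset.sum_mul_sum, Finset.sum_comm]
  simp [Algebra.TensorProduct.tmul_mul_tmul, (ℛ R x).leftHit_eq, Finset.sum_mul]

lemma RM.counit_mul_rightHit (hrm : RM R H) (h k l : H) :
    ε (h * rightHit (ε ∘ₗ LinearMap.mulRight R l) k) = ε (h * k * l) := by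
  rw [hrm, (ℛ R k).rightHit_eq, ← (ℛ R k).eq]
  simp [Finset.mul_sum]

lemma RM.counit_leftHit_mul (hrm : RM R H) (h k l : H) :
    ε (leftHit (ε ∘ₗ LinearMap.mulLeft R h) k * l) = ε (h * k * l) := by
  rw [hrm, (ℛ R k).leftHit_eq, ← (ℛ R k).eq]
  simp [Finset.sum_mul, mul_comm]

lemma epsT_eq_rightHit (a : H) : epsT R H a = rightHit (ε ∘ₗ LinearMap.mulRight R a) 1 := by
  rw [(ℛ R (1 : H)).rightHit_eq, epsT]
  simp [← (ℛ R (1 : H)).eq, Finset.sum_mul, Algebra.TensorProduct.tmul_mul_tmul]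

lemma epsS_eq_leftHit (a : H) : epsS R H a = leftHit (ε ∘ₗ LinearMap.mulLeft R a) 1 := by
  rw [(ℛ R (1 : H)).leftHit_eq, epsS]
  simp [← (ℛ R (1 : H)).eq, Finset.mul_sum, Algebra.TensorProduct.tmul_mul_tmul]

lemma epsT_one : epsT R H 1 = 1 := by
  simp [epsT_eq_rightHit]

lemma epsS_one : epsS R H 1 = 1 := by
  simp [epsS_eq_leftHit]

lemma mul_epsT (hpre : ComulMul R H) (hrm : RM R H) (x b : H) :
    x * epsT R H b = rightHit (ε ∘ₗ LinearMap.mulRight R b) x := by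
  have hit_eps : ∀ l : H, rightHit (ε ∘ₗ LinearMap.mulLeft R l) (epsT R H b) =
      rightHit ((ε ∘ₗ LinearMap.mulRight R b) ∘ₗ LinearMap.mulLeft R l) 1 := by
    intro l
    rw [epsT_eq_rightHit, rightHit_rightHit]
    congr 2
    ext k
    simp [hrm.counit_mul_rightHit]
  calc x * epsT R H b = rightHit ε (x * epsT R H b) := (rightHit_counit _).symm
    _ = ∑ i ∈ (ℛ R x).index, (ℛ R x).right i *
          rightHit ((ε ∘ₗ LinearMap.mulRight R b) ∘ₗ LinearMap.mulLeft R ((ℛ R x).left i)) 1 := by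
      rw [rightHit_mul hpre (ℛ R x)]
      simp only [hit_eps]
    _ = rightHit (ε ∘ₗ LinearMap.mulRight R b) x := by
      rw [← rightHit_mul hpre, mul_one]

lemma epsS_mul (hpre : ComulMul R H) (hrm : RM R H) (h x : H) :
    epsS R H h * x = leftHit (ε ∘ₗ LinearMap.mulLeft R h) x := by
  have hit_eps : ∀ r : H, leftHit (ε ∘ₗ LinearMap.mulRight R r) (epsS R H h) =
      leftHit ((ε ∘ₗ LinearMap.mulLeft R h) ∘ₗ LinearMap.mulRight R r) 1 := by
    intro r
    rw [epsS_eq_leftHit, leftHit_leftHit]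
    congr 2
    ext k
    simp [hrm.counit_leftHit_mul, mul_assoc]
  calc epsS R H h * x = leftHit ε (epsS R H h * x) := (leftHit_counit _).symm
    _ = ∑ i ∈ (ℛ R x).index,
          leftHit ((ε ∘ₗ LinearMap.mulLeft R h) ∘ₗ LinearMap.mulRight R ((ℛ R x).right i)) 1 *
            (ℛ R x).left i := by
      rw [leftHit_mul hpre (ℛ R x)]
      simp only [hit_eps]
    _ = leftHit (ε ∘ₗ LinearMap.mulLeft R h) x := by
      rw [← leftHit_mul hpre, one_mul]

theorem epsT_mul_epsT (hpre : ComulMul R H) (hrm : RM R H) (a b : H) :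
    epsT R H a * epsT R H b = epsT R H (epsT R H a * b) := by
  have hconv : (ε ∘ₗ LinearMap.mulRight R b) ∘ₗ rightHit (ε ∘ₗ LinearMap.mulRight R a) =
      ε ∘ₗ LinearMap.mulRight R (epsT R H a * b) := by
    ext y
    simp [← mul_epsT hpre hrm, mul_assoc]
  calc epsT R H a * epsT R H b = rightHit (ε ∘ₗ LinearMap.mulRight R b) (epsT R H a) :=
        mul_epsT hpre hrm _ _
    _ = rightHit (ε ∘ₗ LinearMap.mulRight R (epsT R H a * b)) 1 := by
        rw [← hconv, ← rightHit_rightHit, ← epsT_eq_rightHit]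
    _ = epsT R H (epsT R H a * b) := (epsT_eq_rightHit _).symm

theorem epsS_mul_epsS (hpre : ComulMul R H) (hrm : RM R H) (h g : H) :
    epsS R H h * epsS R H g = epsS R H (h * epsS R H g) := by
  have hconv : (ε ∘ₗ LinearMap.mulLeft R h) ∘ₗ leftHit (ε ∘ₗ LinearMap.mulLeft R g) =
      ε ∘ₗ LinearMap.mulLeft R (h * epsS R H g) := by
    ext y
    simp [← epsS_mul hpre hrm]
  calc epsS R H h * epsS R H g = leftHit (ε ∘ₗ LinearMap.mulLeft R h) (epsS R H g) :=
        epsS_mul hpre hrm _ _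
    _ = leftHit (ε ∘ₗ LinearMap.mulLeft R (h * epsS R H g)) 1 := by
        rw [← hconv, ← leftHit_leftHit, ← epsS_eq_leftHit]
    _ = epsS R H (h * epsS R H g) := (epsS_eq_leftHit _).symm

end Prebialgebra

/-- If a prebialgebra `H` satisfies (rm), then
`ε_t(h)ε_t(g) = ε_t(ε_t(h)g)` and `ε_s(h)ε_s(g) = ε_s(hε_s(g))`; consequently
`H_t = Im(ε_t)` and `H_s = Im(ε_s)` are subalgebras of `H`. -/
theorem rm_epsT_epsS_mul
    (R H : Type) [CommRing R] [Ring H] [Algebra R H] [Coalgebra R H]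
    (hpre : ComulMul R H) (hrm : RM R H) :
    (∀ h g : H, epsT R H h * epsT R H g = epsT R H (epsT R H h * g)) ∧
    (∀ h g : H, epsS R H h * epsS R H g = epsS R H (h * epsS R H g)) ∧
    (1 : H) ∈ Set.range (epsT R H) ∧
    (∀ x ∈ Set.range (epsT R H), ∀ y ∈ Set.range (epsT R H),
      x * y ∈ Set.range (epsT R H)) ∧
    (1 : H) ∈ Set.range (epsS R H) ∧
    (∀ x ∈ Set.range (epsS R H), ∀ y ∈ Set.range (epsS R H),
      x * y ∈ Set.range (epsS R H)) := by
  refine ⟨epsT_mul_epsT hpre hrm, epsS_mul_epsS hpre hrm, ⟨1, epsT_one⟩, ?_, ⟨1, epsS_one⟩, ?_⟩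
  · rintro _ ⟨h, rfl⟩ _ ⟨g, rfl⟩
    exact ⟨_, (epsT_mul_epsT hpre hrm h g).symm⟩
  · rintro _ ⟨h, rfl⟩ _ ⟨g, rfl⟩
    exact ⟨_, (epsS_mul_epsS hpre hrm h g).symm⟩
end

section
/- Let H be a prebialgebra satisfying the right comonoidality axiom (rc): Δ²(1) = 1₍₁₎ ⊗ 1₍₁'₎1₍₂₎ ⊗ 1₍₂'₎. Then H_t = Im(ε_t) is closed under multiplication, i.e. ε_t(h)ε_t(k) ∈ H_t for all h,k ∈ H; hence H_t is a subalgebra of H. -/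
open TensorProduct Coalgebra

/-! Call `x` target-like when `Δx = Δ(1)(x ⊗ 1)`. Slicing `(id ⊗ Δ)Δ(1)` in its first leg
against `ε(· h)` gives `Δ(ε_t h)`, and (rc) rewrites the same slice as `Δ(1)(ε_t h ⊗ 1)`: every
element of `H_t` is target-like. Conversely the counit axiom gives `ε_t x = x` for target-like
`x`, so `H_t` is exactly the set of target-like elements. Multiplicativity of `Δ`, through
`Δ(x)Δ(1) = Δ(x)`, makes this set closed under products. -/

namespace TensorProduct

variable {R : Type*} [CommSemiring R]

section Module

variable {A M N : Type*} [AddCommMonoid A] [Module R A] [AddCommMonoid M] [Module R M]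
  [AddCommMonoid N] [Module R N]

noncomputable def sliceLeft (φ : A →ₗ[R] R) : A ⊗[R] M →ₗ[R] M :=
  (TensorProduct.lid R M).toLinearMap ∘ₗ φ.rTensor M

@[simp]
lemma sliceLeft_tmul (φ : A →ₗ[R] R) (a : A) (m : M) :
    sliceLeft φ (a ⊗ₜ[R] m) = φ a • m := by
  simp [sliceLeft]

lemma sliceLeft_lTensor (φ : A →ₗ[R] R) (f : M →ₗ[R] N) (t : A ⊗[R] M) :
    sliceLeft φ (f.lTensor A t) = f (sliceLeft φ t) := by
  induction t using TensorProduct.induction_on with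
  | zero => simp
  | tmul a m => simp
  | add x y hx hy => simp [hx, hy]

end Module

section Algebra

variable {A B : Type*} [Semiring A] [Algebra R A] [Semiring B] [Algebra R B]

lemma sliceLeft_one_tmul_mul (φ : A →ₗ[R] R) (b : B) (t : A ⊗[R] B) :
    sliceLeft φ (((1 : A) ⊗ₜ[R] b) * t) = b * sliceLeft φ t := by
  induction t using TensorProduct.induction_on with
  | zero => simp
  | tmul a c => simp [Algebra.TensorProduct.tmul_mul_tmul]
  | add x y hx hy => simp [mul_add, hx, hy]

lemma sliceLeft_mul_tmul_one (φ : A →ₗ[R] R) (a : A) (t : A ⊗[R] B) :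
    sliceLeft φ (t * (a ⊗ₜ[R] (1 : B))) = sliceLeft (φ ∘ₗ LinearMap.mulRight R a) t := by
  induction t using TensorProduct.induction_on with
  | zero => simp
  | tmul x b => simp [Algebra.TensorProduct.tmul_mul_tmul]
  | add x y hx hy => simp [add_mul, hx, hy]

end Algebra

end TensorProduct

namespace Prebialgebra

variable {R H : Type} [CommRing R] [Ring H] [Algebra R H] [Coalgebra R H]

lemma epsT_apply (h : H) :
    epsT R H h = sliceLeft (counit ∘ₗ LinearMap.mulRight R h) (comul (1 : H)) := by
  rw [← sliceLeft_mul_tmul_one]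
  rfl

noncomputable def targetSubmodule (R H : Type) [CommRing R] [Ring H] [Algebra R H]
    [Coalgebra R H] : Submodule R H :=
  LinearMap.eqLocus comul
    (LinearMap.mulLeft R (comul (1 : H)) ∘ₗ
      (Algebra.TensorProduct.includeLeft : H →ₐ[R] H ⊗[R] H).toLinearMap)

lemma mem_targetSubmodule {x : H} :
    x ∈ targetSubmodule R H ↔ comul x = comul (1 : H) * (x ⊗ₜ[R] (1 : H)) :=
  Iff.rfl

lemma one_mem_targetSubmodule : (1 : H) ∈ targetSubmodule R H := by
  rw [mem_targetSubmodule, ← Algebra.TensorProduct.one_def, mul_one]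

lemma mul_mem_targetSubmodule (hΔ : ComulMul R H) {x y : H} (hx : x ∈ targetSubmodule R H)
    (hy : y ∈ targetSubmodule R H) : x * y ∈ targetSubmodule R H := by
  rw [mem_targetSubmodule] at hx hy ⊢
  have hΔx : comul x * comul (1 : H) = comul (R := R) x := by rw [← hΔ, mul_one]
  calc comul (R := R) (x * y) = comul x * (comul (1 : H) * (y ⊗ₜ[R] 1)) := by rw [hΔ, hy]
    _ = comul (1 : H) * (x ⊗ₜ[R] 1) * (y ⊗ₜ[R] 1) := by rw [← mul_assoc, hΔx, hx]
    _ = comul (1 : H) * ((x * y) ⊗ₜ[R] 1) := by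
      rw [mul_assoc, Algebra.TensorProduct.tmul_mul_tmul, one_mul]

noncomputable def targetSubalgebra (hΔ : ComulMul R H) : Subalgebra R H :=
  (targetSubmodule R H).toSubalgebra one_mem_targetSubmodule
    fun _ _ ↦ mul_mem_targetSubmodule hΔ

lemma epsT_eq_self_of_mem_targetSubmodule {x : H} (hx : x ∈ targetSubmodule R H) :
    epsT R H x = x := by
  have hε : sliceLeft counit (comul (R := R) x) = x := by
    simp [sliceLeft, Coalgebra.rTensor_counit_comul]
  calc epsT R H x = sliceLeft counit (comul (1 : H) * (x ⊗ₜ[R] 1)) := rfl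
    _ = x := by rw [← mem_targetSubmodule.1 hx, hε]

lemma epsT_mem_targetSubmodule (hrc : RC R H) (h : H) : epsT R H h ∈ targetSubmodule R H := by
  let φ := counit ∘ₗ LinearMap.mulRight R h
  rw [mem_targetSubmodule]
  calc comul (epsT R H h) = sliceLeft φ (comulSq1 R H) := by
        rw [epsT_apply]; exact (sliceLeft_lTensor φ comul _).symm
    _ = comul (1 : H) * sliceLeft φ (d1Left R H) := by
        rw [hrc, d1Right, sliceLeft_one_tmul_mul]
    _ = comul (1 : H) * (epsT R H h ⊗ₜ[R] 1) := by
        rw [epsT_apply]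
        exact congrArg _ (sliceLeft_lTensor φ
          (Algebra.TensorProduct.includeLeft : H →ₐ[R] H ⊗[R] H).toLinearMap _)

lemma range_epsT (hrc : RC R H) : Set.range (epsT R H) = targetSubmodule R H :=
  Set.Subset.antisymm (Set.range_subset_iff.2 (epsT_mem_targetSubmodule hrc))
    fun x hx ↦ ⟨x, epsT_eq_self_of_mem_targetSubmodule hx⟩

end Prebialgebra

/-- If a prebialgebra `H` satisfies (rc), then `H_t = Im(ε_t)` is closed
under multiplication, hence a subalgebra of `H`. -/
theorem rc_Ht_subalgebra
    (R H : Type) [CommRing R] [Ring H] [Algebra R H] [Coalgebra R H]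
    (hpre : ComulMul R H) (hrc : RC R H) :
    (∀ h k : H, epsT R H h * epsT R H k ∈ Set.range (epsT R H)) ∧
    (1 : H) ∈ Set.range (epsT R H) := by
  have hHt (x : H) : x ∈ Set.range (epsT R H) ↔ x ∈ Prebialgebra.targetSubalgebra hpre := by
    rw [Prebialgebra.range_epsT hrc]; rfl
  simp only [hHt]
  exact ⟨fun h k ↦ mul_mem ((hHt _).1 ⟨h, rfl⟩) ((hHt _).1 ⟨k, rfl⟩), one_mem _⟩
end

section
/- Let H be a prebialgebra satisfying the right comonoidality axiom (rc). Then Δ(1) ∈ H_s ⊗ H_t, i.e. (ε_s ⊗ ε_t)(Δ(1)) = Δ(1), where ε_t(h) = ε(1₍₁₎h)1₍₂₎, ε_s(h) = ε(h1₍₂₎)1₍₁₎, H_t = Im(ε_t), H_s = Im(ε_s). -/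
/-!
Applying `id ⊗ ε ⊗ id` to (rc) and using counitality on the left gives
`Δ(1) = ε(1₍₁'₎1₍₂₎) 1₍₁₎ ⊗ 1₍₂'₎`. Summing over the primed copy first, the right leg is
`ε_t(1₍₂₎)`; summing over the unprimed copy first, the left leg is `ε_s(1₍₁'₎)`. So both
`id ⊗ ε_t` and `ε_s ⊗ id` fix `Δ(1)`, hence so does their composite `ε_s ⊗ ε_t`.
-/

open TensorProduct Coalgebra

section Coalgebra

variable {R H : Type} [CommSemiring R] [AddCommMonoid H] [Module R H] [Coalgebra R H]

noncomputable def counitMiddle : H ⊗[R] (H ⊗[R] H) →ₗ[R] H ⊗[R] H :=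
  LinearMap.lTensor H ((TensorProduct.lid R H).toLinearMap ∘ₗ counit.rTensor H)

@[simp]
theorem counitMiddle_tmul (x y z : H) :
    counitMiddle (x ⊗ₜ[R] (y ⊗ₜ[R] z)) = counit (R := R) y • (x ⊗ₜ[R] z) := by
  simp [counitMiddle, TensorProduct.tmul_smul]

theorem counitMiddle_lTensor_comul (x : H ⊗[R] H) :
    counitMiddle (comul.lTensor H x) = x := by
  have hcounit : (TensorProduct.lid R H).toLinearMap ∘ₗ counit.rTensor H ∘ₗ comul =
      LinearMap.id := by
    ext; simp
  rw [counitMiddle, ← LinearMap.comp_apply, ← LinearMap.lTensor_comp, LinearMap.comp_assoc,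
    hcounit, LinearMap.lTensor_id, LinearMap.id_apply]

end Coalgebra

section Prebialgebra

variable {R H : Type} [CommRing R] [Ring H] [Algebra R H] [Coalgebra R H] {ι : Type*}

theorem epsT_apply (repr : Coalgebra.Repr R (1 : H) ι) (h : H) :
    epsT R H h = ∑ i ∈ repr.index, counit (R := R) (repr.left i * h) • repr.right i := by
  simp [epsT, ← repr.eq, Finset.sum_mul, Algebra.TensorProduct.tmul_mul_tmul]

theorem epsS_apply (repr : Coalgebra.Repr R (1 : H) ι) (h : H) :
    epsS R H h = ∑ i ∈ repr.index, counit (R := R) (h * repr.right i) • repr.left i := by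
  simp [epsS, ← repr.eq, Finset.mul_sum, Algebra.TensorProduct.tmul_mul_tmul]

theorem counitMiddle_d1Right_mul_d1Left (repr : Coalgebra.Repr R (1 : H) ι) :
    counitMiddle (d1Right R H * d1Left R H) = ∑ i ∈ repr.index, ∑ j ∈ repr.index,
      counit (R := R) (repr.left j * repr.right i) • (repr.left i ⊗ₜ[R] repr.right j) := by
  simp [d1Right, d1Left, ← repr.eq, Finset.sum_mul, Finset.mul_sum,
    Algebra.TensorProduct.tmul_mul_tmul, TensorProduct.tmul_sum]

theorem comul_one_eq_sum_of_RC (hrc : RC R H) (repr : Coalgebra.Repr R (1 : H) ι) :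
    comul (R := R) (1 : H) = ∑ i ∈ repr.index, ∑ j ∈ repr.index,
      counit (R := R) (repr.left j * repr.right i) • (repr.left i ⊗ₜ[R] repr.right j) := by
  rw [← counitMiddle_d1Right_mul_d1Left repr, ← hrc]
  exact (counitMiddle_lTensor_comul _).symm

theorem lTensor_epsT_comul_one (hrc : RC R H) :
    (epsT R H).lTensor H (comul (R := R) (1 : H)) = comul (R := R) (1 : H) := by
  let repr := ℛ R (1 : H)
  conv_lhs => rw [← repr.eq]
  rw [comul_one_eq_sum_of_RC hrc repr]
  simp [epsT_apply repr, TensorProduct.tmul_sum, TensorProduct.tmul_smul]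

theorem rTensor_epsS_comul_one (hrc : RC R H) :
    (epsS R H).rTensor H (comul (R := R) (1 : H)) = comul (R := R) (1 : H) := by
  let repr := ℛ R (1 : H)
  conv_lhs => rw [← repr.eq]
  rw [comul_one_eq_sum_of_RC hrc repr, Finset.sum_comm]
  simp [epsS_apply repr, TensorProduct.sum_tmul, TensorProduct.smul_tmul']

end Prebialgebra

theorem rc_comul_one_mem_general
    (R H : Type) [CommRing R] [Ring H] [Algebra R H] [Coalgebra R H]
    (hrc : RC R H) :
    (TensorProduct.map (epsS R H) (epsT R H)) (Coalgebra.comul (R := R) (1 : H)) =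
      Coalgebra.comul (R := R) (1 : H) := by
  rw [← LinearMap.rTensor_comp_lTensor, LinearMap.comp_apply, lTensor_epsT_comul_one hrc,
    rTensor_epsS_comul_one hrc]

/-- If a prebialgebra `H` satisfies (rc), then
`(ε_s ⊗ ε_t)(Δ(1)) = Δ(1)`, i.e. `Δ(1) ∈ H_s ⊗ H_t`. -/
theorem rc_comul_one_mem
    (R H : Type) [CommRing R] [Ring H] [Algebra R H] [Coalgebra R H]
    (hpre : ComulMul R H) (hrc : RC R H) :
    (TensorProduct.map (epsS R H) (epsT R H)) (Coalgebra.comul (R := R) (1 : H)) =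
      Coalgebra.comul (R := R) (1 : H) :=
  rc_comul_one_mem_general R H hrc
end

section
/- Let H be a prebialgebra satisfying (rm) or (rc). Then the maps g: H_t → H_t* and f: H_t* → H_t are mutually inverse k-module isomorphisms, where g(h) = ε(−h), f(h*) = ⟨h*,1₍₁₎⟩1₍₂₎, H_t = Im(f∘g), and H_t* = Im(g∘f). -/
open TensorProduct Coalgebra

/-!
Because `f ∘ g = ε_t`, it suffices that `f ∘ g ∘ f = f` or `g ∘ f ∘ g = g`: either identity makes
both `ε_t = f ∘ g` and `ε_t* = g ∘ f` idempotent, and then `g` and `f` are inverse bijections between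
their images. Axiom (rm) with middle factor `1` gives `g ∘ ε_t = g`; applying `ψ ⊗ ε ⊗ id` to both
sides of axiom (rc) gives `ε_t ∘ f = f`.
-/

theorem Function.mutuallyInverse_on_range_comp {α β : Type*} {f : α → β} {g : β → α}
    (h : (∀ a, f (g (f a)) = f a) ∨ ∀ b, g (f (g b)) = g b) :
    (∀ z ∈ Set.range (f ∘ g), g z ∈ Set.range (g ∘ f)) ∧
    (∀ φ ∈ Set.range (g ∘ f), f φ ∈ Set.range (f ∘ g)) ∧
    (∀ z ∈ Set.range (f ∘ g), f (g z) = z) ∧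
    (∀ φ ∈ Set.range (g ∘ f), g (f φ) = φ) := by
  have idem : (∀ b, f (g (f (g b))) = f (g b)) ∧ ∀ a, g (f (g (f a))) = g (f a) := by
    rcases h with hfgf | hgfg
    · exact ⟨fun b => hfgf (g b), fun a => congrArg g (hfgf a)⟩
    · exact ⟨fun b => congrArg f (hgfg b), fun a => hgfg (f a)⟩
  refine ⟨?_, ?_, ?_, ?_⟩
  · rintro _ ⟨b, rfl⟩
    exact ⟨g b, rfl⟩
  · rintro _ ⟨a, rfl⟩
    exact ⟨f a, rfl⟩
  · rintro _ ⟨b, rfl⟩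
    exact idem.1 b
  · rintro _ ⟨a, rfl⟩
    exact idem.2 a

theorem lid_map_counit_comul {R A : Type*} [CommSemiring R] [AddCommMonoid A] [Module R A]
    [Coalgebra R A] (a : A) :
    TensorProduct.lid R A (map counit LinearMap.id (comul (R := R) a)) = a := by
  change TensorProduct.lid R A (counit.rTensor A (comul a)) = a
  rw [rTensor_counit_comul, TensorProduct.lid_tmul, one_smul]

section

variable {R H : Type} [CommRing R] [Ring H] [Algebra R H] [Coalgebra R H]

theorem epsT_apply_s9 (h : H) :
    epsT R H h = TensorProduct.lid R H (map counit LinearMap.id (comul 1 * (h ⊗ₜ[R] 1))) :=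
  rfl

theorem fmap_gmap (h : H) : fmap R H (gmap R H h) = epsT R H h := by
  rw [epsT_apply_s9, fmap]
  induction comul (R := R) (1 : H) using TensorProduct.induction_on with
  | zero => simp
  | tmul a b => simp [Algebra.TensorProduct.tmul_mul_tmul, gmap]
  | add x y hx hy => simp [add_mul, hx, hy]

theorem gmap_epsT (hrm : RM R H) (h : H) : gmap R H (epsT R H h) = gmap R H h := by
  ext k
  have hrm := hrm k 1 h
  rw [mul_one] at hrm
  simp only [gmap, LinearMap.comp_apply, LinearMap.llcomp_apply, LinearMap.flip_apply,
    LinearMap.mul_apply', hrm, epsT_apply_s9]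
  induction comul (R := R) (1 : H) using TensorProduct.induction_on with
  | zero => simp
  | tmul a b => simp [Algebra.TensorProduct.tmul_mul_tmul, mul_comm]
  | add x y hx hy => simp only [add_mul, map_add, mul_add, hx, hy]

theorem epsT_fmap (hrc : RC R H) (ψ : H →ₗ[R] R) : epsT R H (fmap R H ψ) = fmap R H ψ := by
  set ρ : H ⊗[R] H →ₗ[R] H := (TensorProduct.lid R H).toLinearMap ∘ₗ map counit LinearMap.id
  set Φ : H ⊗[R] (H ⊗[R] H) →ₗ[R] H := (TensorProduct.lid R H).toLinearMap ∘ₗ map ψ ρ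
  have lhs : Φ (comulSq1 R H) = fmap R H ψ := by
    have hρ : ρ ∘ₗ comul = LinearMap.id := LinearMap.ext lid_map_counit_comul
    rw [comulSq1, LinearMap.comp_apply, ← LinearMap.comp_apply (map ψ ρ), ← map_comp,
      LinearMap.comp_id, hρ]
    rfl
  have rhs : ∀ u v : H ⊗[R] H,
      Φ ((1 ⊗ₜ v) * map LinearMap.id Algebra.TensorProduct.includeLeft.toLinearMap u) =
        ρ (v * (TensorProduct.lid R H (map ψ LinearMap.id u) ⊗ₜ 1)) := by
    intro u v
    induction u using TensorProduct.induction_on with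
    | zero => simp
    | tmul a b => simp [Φ, ρ, Algebra.TensorProduct.tmul_mul_tmul, ← TensorProduct.smul_tmul']
    | add x y hx hy => simp only [map_add, mul_add, TensorProduct.add_tmul, hx, hy]
  have := congrArg Φ hrc
  rw [lhs, d1Right, d1Left, rhs] at this
  exact this.symm

end

theorem f_g_inverse_on_Ht_general
    (R H : Type) [CommRing R] [Ring H] [Algebra R H] [Coalgebra R H]
    (hax : RM R H ∨ RC R H) :
    (∀ z ∈ Set.range (epsT R H),
      gmap R H z ∈ Set.range (fun φ : H →ₗ[R] R => gmap R H (fmap R H φ))) ∧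
    (∀ φ ∈ Set.range (fun ψ : H →ₗ[R] R => gmap R H (fmap R H ψ)),
      fmap R H φ ∈ Set.range (epsT R H)) ∧
    (∀ z ∈ Set.range (epsT R H), fmap R H (gmap R H z) = z) ∧
    (∀ φ ∈ Set.range (fun ψ : H →ₗ[R] R => gmap R H (fmap R H ψ)),
      gmap R H (fmap R H φ) = φ) := by
  have regular : (∀ ψ, fmap R H (gmap R H (fmap R H ψ)) = fmap R H ψ) ∨
      ∀ h, gmap R H (fmap R H (gmap R H h)) = gmap R H h := by
    rcases hax with hrm | hrc
    · exact .inr fun h => by rw [fmap_gmap, gmap_epsT hrm]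
    · exact .inl fun ψ => by rw [fmap_gmap, epsT_fmap hrc]
  have hεt : ⇑(epsT R H) = fmap R H ∘ gmap R H := funext fun h => (fmap_gmap h).symm
  rw [hεt]
  exact Function.mutuallyInverse_on_range_comp regular

/-- If a prebialgebra `H` satisfies (rm) or (rc), then `g` and `f` restrict
to mutually inverse isomorphisms between `H_t = Im(ε_t) = Im(f∘g)` and
`H_t* = Im(ε_t*) = Im(g∘f)`. -/
theorem f_g_inverse_on_Ht
    (R H : Type) [CommRing R] [Ring H] [Algebra R H] [Coalgebra R H]
    (hpre : ComulMul R H) (hax : RM R H ∨ RC R H) :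
    (∀ z ∈ Set.range (epsT R H),
      gmap R H z ∈ Set.range (fun φ : H →ₗ[R] R => gmap R H (fmap R H φ))) ∧
    (∀ φ ∈ Set.range (fun ψ : H →ₗ[R] R => gmap R H (fmap R H ψ)),
      fmap R H φ ∈ Set.range (epsT R H)) ∧
    (∀ z ∈ Set.range (epsT R H), fmap R H (gmap R H z) = z) ∧
    (∀ φ ∈ Set.range (fun ψ : H →ₗ[R] R => gmap R H (fmap R H ψ)),
      gmap R H (fmap R H φ) = φ) :=
  f_g_inverse_on_Ht_general R H hax
end

section
/- Let H be a prebialgebra satisfying the left monoidality axiom (lm): ε(hkl)=ε(hk₍₁₎)ε(k₍₂₎l). Then g ∘ ε̄_s = g and consequently ε_t ∘ ε̄_s = ε_t, where g(h) = ε(−h), ε̄_s(h) = ε(1₍₂₎h)1₍₁₎, and ε_t(h) = ε(1₍₁₎h)1₍₂₎. -/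
open TensorProduct Coalgebra

/-! Axiom (lm) with middle factor `1` reads `ε(kh) = ε(k1₍₁₎)ε(1₍₂₎h) = ε(k ε̄_s(h))`, i.e.
`g ∘ ε̄_s = g`. The second identity follows because `ε_t(h) = ε(1₍₁₎h)1₍₂₎` depends on `h`
only through `g(h)`. -/

section LeftMonoidal

variable {R H : Type} [CommRing R] [Ring H] [Algebra R H] [Coalgebra R H]

theorem counit_mul_rid_map_counit_mul_one_tmul (k h : H) (x : H ⊗[R] H) :
    counit (R := R) (k * TensorProduct.rid R H (map LinearMap.id counit (x * (1 ⊗ₜ h)))) =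
      LinearMap.mul' R R
        (map (counit ∘ₗ LinearMap.mulLeft R k) (counit ∘ₗ LinearMap.mulRight R h) x) := by
  induction x using TensorProduct.induction_on with
  | zero => simp
  | tmul a b => simp [Algebra.TensorProduct.tmul_mul_tmul, mul_comm]
  | add y z hy hz => simp only [add_mul, map_add, mul_add, hy, hz]

theorem gmap_epsSbar (hlm : LM R H) (h : H) : gmap R H (epsSbar R H h) = gmap R H h := by
  ext k
  have hlm' := hlm k 1 h
  rw [mul_one] at hlm'
  simpa [gmap, epsSbar, hlm'] using counit_mul_rid_map_counit_mul_one_tmul k h (comul (1 : H))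

theorem epsT_eq_of_gmap_eq {a b : H} (hab : gmap R H a = gmap R H b) :
    epsT R H a = epsT R H b := by
  have hab' (k : H) : counit (R := R) (k * a) = counit (k * b) := LinearMap.congr_fun hab k
  simp only [epsT, LinearMap.comp_apply, AlgHom.toLinearMap_apply,
    Algebra.TensorProduct.includeLeft_apply, LinearMap.mulLeft_apply]
  induction comul (R := R) (1 : H) using TensorProduct.induction_on with
  | zero => simp
  | tmul u v => simp [Algebra.TensorProduct.tmul_mul_tmul, hab' u]
  | add y z hy hz => simp only [add_mul, map_add, hy, hz]

end LeftMonoidal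

theorem lm_g_comp_epsSbar_general
    (R H : Type) [CommRing R] [Ring H] [Algebra R H] [Coalgebra R H]
    (hlm : LM R H) :
    gmap R H ∘ₗ epsSbar R H = gmap R H ∧
    epsT R H ∘ₗ epsSbar R H = epsT R H :=
  ⟨LinearMap.ext (gmap_epsSbar hlm),
    LinearMap.ext fun h => epsT_eq_of_gmap_eq (gmap_epsSbar hlm h)⟩

/-- If a prebialgebra `H` satisfies (lm), then `g ∘ ε̄_s = g` and
consequently `ε_t ∘ ε̄_s = ε_t`. -/
theorem lm_g_comp_epsSbar
    (R H : Type) [CommRing R] [Ring H] [Algebra R H] [Coalgebra R H]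
    (hpre : ComulMul R H) (hlm : LM R H) :
    gmap R H ∘ₗ epsSbar R H = gmap R H ∧
    epsT R H ∘ₗ epsSbar R H = epsT R H :=
  lm_g_comp_epsSbar_general R H hlm
end

section
/- Let H be a comonoidal prebialgebra (satisfying both (lc) and (rc)). Then ε_s(h)ε_t(k) = ε_t(k)ε_s(h) for all h,k ∈ H, where ε_t(h) = ε(1₍₁₎h)1₍₂₎ and ε_s(h) = ε(h1₍₂₎)1₍₁₎. -/
open TensorProduct Coalgebra

/-!
By (lc) and (rc) both products `1₍₁₎ ⊗ 1₍₂₎1₍₁'₎ ⊗ 1₍₂'₎` and `1₍₁₎ ⊗ 1₍₁'₎1₍₂₎ ⊗ 1₍₂'₎` equal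
`Δ²(1)`. Contracting the outer tensor factors of this identity with `ε(- k)` and `ε(h -)` turns the
left-hand side into `ε_t(k)ε_s(h)` and the right-hand side into `ε_s(h)ε_t(k)`.
-/

section Contraction

variable {R H : Type*} [CommSemiring R] [Semiring H] [Algebra R H]

noncomputable def contractFst (φ : H →ₗ[R] R) : H ⊗[R] H →ₗ[R] H :=
  (TensorProduct.lid R H).toLinearMap ∘ₗ TensorProduct.map φ LinearMap.id

noncomputable def contractSnd (ψ : H →ₗ[R] R) : H ⊗[R] H →ₗ[R] H :=
  (TensorProduct.rid R H).toLinearMap ∘ₗ TensorProduct.map LinearMap.id ψ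

noncomputable def contractOuter (φ ψ : H →ₗ[R] R) : H ⊗[R] (H ⊗[R] H) →ₗ[R] H :=
  (TensorProduct.lid R H).toLinearMap ∘ₗ TensorProduct.map φ (contractSnd ψ)

@[simp]
lemma contractFst_tmul (φ : H →ₗ[R] R) (x y : H) : contractFst φ (x ⊗ₜ y) = φ x • y := by
  simp [contractFst]

@[simp]
lemma contractSnd_tmul (ψ : H →ₗ[R] R) (x y : H) : contractSnd ψ (x ⊗ₜ y) = ψ y • x := by
  simp [contractSnd]

@[simp]
lemma contractOuter_tmul_tmul (φ ψ : H →ₗ[R] R) (x y z : H) :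
    contractOuter φ ψ (x ⊗ₜ (y ⊗ₜ z)) = φ x • ψ z • y := by
  simp [contractOuter, smul_comm (ψ z)]

lemma contractFst_mul_tmul_one (φ : H →ₗ[R] R) (k : H) (a : H ⊗[R] H) :
    contractFst φ (a * (k ⊗ₜ[R] 1)) = contractFst (φ ∘ₗ LinearMap.mulRight R k) a := by
  induction a using TensorProduct.induction_on with
  | zero => simp
  | add a₁ a₂ ih₁ ih₂ => simp only [add_mul, map_add, ih₁, ih₂]
  | tmul x y => simp [Algebra.TensorProduct.tmul_mul_tmul]

lemma contractSnd_one_tmul_mul (ψ : H →ₗ[R] R) (h : H) (a : H ⊗[R] H) :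
    contractSnd ψ ((1 ⊗ₜ[R] h) * a) = contractSnd (ψ ∘ₗ LinearMap.mulLeft R h) a := by
  induction a using TensorProduct.induction_on with
  | zero => simp
  | add a₁ a₂ ih₁ ih₂ => simp only [mul_add, map_add, ih₁, ih₂]
  | tmul x y => simp [Algebra.TensorProduct.tmul_mul_tmul]

lemma contractOuter_mul_one_tmul (φ ψ : H →ₗ[R] R) (a b : H ⊗[R] H) :
    contractOuter φ ψ
        (TensorProduct.map LinearMap.id Algebra.TensorProduct.includeLeft.toLinearMap a *
          ((1 : H) ⊗ₜ[R] b)) =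
      contractFst φ a * contractSnd ψ b := by
  induction a using TensorProduct.induction_on with
  | zero => simp
  | add a₁ a₂ ih₁ ih₂ => simp only [map_add, add_mul, ih₁, ih₂]
  | tmul x y =>
    induction b using TensorProduct.induction_on with
    | zero => simp
    | add b₁ b₂ ih₁ ih₂ => simp only [tmul_add, mul_add, map_add, ih₁, ih₂]
    | tmul p q =>
      simp [Algebra.TensorProduct.tmul_mul_tmul, smul_smul, mul_comm]

lemma contractOuter_one_tmul_mul (φ ψ : H →ₗ[R] R) (a b : H ⊗[R] H) :
    contractOuter φ ψ
        (((1 : H) ⊗ₜ[R] b) *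
          TensorProduct.map LinearMap.id Algebra.TensorProduct.includeLeft.toLinearMap a) =
      contractSnd ψ b * contractFst φ a := by
  induction a using TensorProduct.induction_on with
  | zero => simp
  | add a₁ a₂ ih₁ ih₂ => simp only [map_add, mul_add, ih₁, ih₂]
  | tmul x y =>
    induction b using TensorProduct.induction_on with
    | zero => simp
    | add b₁ b₂ ih₁ ih₂ => simp only [tmul_add, add_mul, map_add, ih₁, ih₂]
    | tmul p q =>
      simp [Algebra.TensorProduct.tmul_mul_tmul, smul_smul]

end Contraction

section Prebialgebra

variable {R H : Type} [CommRing R] [Ring H] [Algebra R H] [Coalgebra R H]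

lemma epsT_eq_contractFst (k : H) :
    epsT R H k = contractFst (counit ∘ₗ LinearMap.mulRight R k) (comul (R := R) 1) :=
  contractFst_mul_tmul_one counit k (comul 1)

lemma epsS_eq_contractSnd (h : H) :
    epsS R H h = contractSnd (counit ∘ₗ LinearMap.mulLeft R h) (comul (R := R) 1) :=
  contractSnd_one_tmul_mul counit h (comul 1)

end Prebialgebra

theorem c_epsS_epsT_comm_general
    (R H : Type) [CommRing R] [Ring H] [Algebra R H] [Coalgebra R H]
    (hlc : LC R H) (hrc : RC R H) :
    ∀ h k : H, epsS R H h * epsT R H k = epsT R H k * epsS R H h := by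
  intro h k
  have key := congrArg
    (contractOuter (counit ∘ₗ LinearMap.mulRight R k)
      (counit ∘ₗ LinearMap.mulLeft R h)) (hlc.symm.trans hrc)
  rw [d1Left, d1Right, contractOuter_mul_one_tmul, contractOuter_one_tmul_mul] at key
  rw [epsS_eq_contractSnd, epsT_eq_contractFst, key]

/-- In a comonoidal prebialgebra (satisfying (lc) and (rc)),
`ε_s(h)ε_t(k) = ε_t(k)ε_s(h)` for all `h,k`. -/
theorem c_epsS_epsT_comm
    (R H : Type) [CommRing R] [Ring H] [Algebra R H] [Coalgebra R H]
    (hpre : ComulMul R H) (hlc : LC R H) (hrc : RC R H) :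
    ∀ h k : H, epsS R H h * epsT R H k = epsT R H k * epsS R H h :=
  c_epsS_epsT_comm_general R H hlc hrc
end

section
/- Let H be a monoidal prebialgebra (satisfying both (lm) and (rm)). Then ε_s(h₍₁₎) ⊗ ε_t(h₍₂₎) = ε_s(h₍₂₎) ⊗ ε_t(h₍₁₎) for all h ∈ H, where ε_t(h) = ε(1₍₁₎h)1₍₂₎ and ε_s(h) = ε(h1₍₂₎)1₍₁₎. -/
open TensorProduct Coalgebra

section DecomposeUnit

variable {R H : Type} [CommRing R] [Ring H] [Algebra R H] [Coalgebra R H]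
  {S : Finset (H × H)} (hS : comul (R := R) (1 : H) = ∑ q ∈ S, q.1 ⊗ₜ[R] q.2)
include hS

lemma epsS_eq_sum (c : H) : epsS R H c = ∑ q ∈ S, counit (R := R) (c * q.2) • q.1 := by
  simp [epsS, hS, Finset.mul_sum, Algebra.TensorProduct.tmul_mul_tmul]

lemma epsT_eq_sum (c : H) : epsT R H c = ∑ q ∈ S, counit (R := R) (q.1 * c) • q.2 := by
  simp [epsT, hS, Finset.sum_mul, Algebra.TensorProduct.tmul_mul_tmul]

lemma map_epsS_epsT_eq_sum (x : H ⊗[R] H) :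
    map (epsS R H) (epsT R H) x =
      ∑ q ∈ S, ∑ q' ∈ S,
        LinearMap.mul' R R (map (counit ∘ₗ LinearMap.mulRight R q.2)
          (counit ∘ₗ LinearMap.mulLeft R q'.1) x) • (q.1 ⊗ₜ[R] q'.2) := by
  induction x using TensorProduct.induction_on with
  | zero => simp
  | tmul a b =>
    simp only [map_tmul, epsS_eq_sum hS, epsT_eq_sum hS, sum_tmul, tmul_sum, smul_tmul_smul,
      LinearMap.mul'_apply, LinearMap.comp_apply, LinearMap.mulRight_apply,
      LinearMap.mulLeft_apply]
    exact Finset.sum_comm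
  | add x y hx hy =>
    simp only [map_add, hx, hy, add_smul, Finset.sum_add_distrib]

end DecomposeUnit

theorem m_epsS_epsT_symm_general
    (R H : Type) [CommRing R] [Ring H] [Algebra R H] [Coalgebra R H]
    (hlm : LM R H) (hrm : RM R H) :
    ∀ h : H,
      (TensorProduct.map (epsS R H) (epsT R H)) (Coalgebra.comul (R := R) h) =
        (TensorProduct.map (epsS R H) (epsT R H))
          ((TensorProduct.comm R H H) (Coalgebra.comul (R := R) h)) := by
  intro h
  obtain ⟨S, hS⟩ := TensorProduct.exists_finset (comul (R := R) (1 : H))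
  rw [map_epsS_epsT_eq_sum hS, map_epsS_epsT_eq_sum hS]
  refine Finset.sum_congr rfl fun q _ => Finset.sum_congr rfl fun q' _ => ?_
  -- both coefficients are `ε(q'₁ h q₂)`, expanded by (rm) and by (lm) respectively
  rw [map_comm, LinearMap.mul'_comm, ← hrm, ← hlm]

/-- In a monoidal prebialgebra (satisfying (lm) and (rm)),
`ε_s(h₍₁₎) ⊗ ε_t(h₍₂₎) = ε_s(h₍₂₎) ⊗ ε_t(h₍₁₎)` for all `h`. -/
theorem m_epsS_epsT_symm
    (R H : Type) [CommRing R] [Ring H] [Algebra R H] [Coalgebra R H]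
    (hpre : ComulMul R H) (hlm : LM R H) (hrm : RM R H) :
    ∀ h : H,
      (TensorProduct.map (epsS R H) (epsT R H)) (Coalgebra.comul (R := R) h) =
        (TensorProduct.map (epsS R H) (epsT R H))
          ((TensorProduct.comm R H H) (Coalgebra.comul (R := R) h)) :=
  m_epsS_epsT_symm_general R H hlm hrm
end
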